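/- Fix α ∈ ℝ. On (0, ∞) set t(z) := (1 + z²)^{−1/2}, and define q_{−2}(z) := −(1 + 1/z²), q_{−1}(z) := −2α/z², q_0(z) := (1/4 − α²)/z², S_{−1}(z) := √(−q_{−2}(z)) = √(1 + z²)/z, S_0(z) := −q_{−1}(z)/(2 S_{−1}(z)) − S_{−1}′(z)/(2 S_{−1}(z)), and S_1(z) := −( q_0(z) + S_0′(z) + S_0(z)² ) / (2 S_{−1}(z)). Then for every z > 0, S_1(z) equals the derivative with respect to z of C_1(z, α) := t(z)/8 − α² t(z)/2 − α t(z)²/2 − 5 t(z)³/24. -/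

import Mathlib

/-! With `t = (1 + z²)^(-1/2)` one has `t' = -z t³` and `t² (1 + z²) = 1`, and for `z > 0`
`S_{-1} = 1 / (z t)`, `S_0 = (α t + t² / 2) / z`. So `S_1` and `C_1'` are rational in `z` and `t`,
and both reduce to `-z t³ (1/8 - α²/2 - α t - 5 t²/8)` modulo `t² (1 + z²) = 1`. -/

/-- `q_{−2}(z) = −(1 + 1/z²)` of the Bessel Riccati recursion. -/
noncomputable def qm2 (z : ℝ) : ℝ := -(1 + 1 / z ^ 2)

/-- `q_{−1}(z) = −2α/z²` of the Bessel Riccati recursion. -/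
noncomputable def qm1 (α z : ℝ) : ℝ := -(2 * α) / z ^ 2

/-- `q_0(z) = (1/4 − α²)/z²` of the Bessel Riccati recursion. -/
noncomputable def q0 (α z : ℝ) : ℝ := (1 / 4 - α ^ 2) / z ^ 2

/-- `S_{−1}(z) = √(−q_{−2}(z))`. -/
noncomputable def Sm1 (z : ℝ) : ℝ := Real.sqrt (-qm2 z)

/-- `S_0(z) = −q_{−1}(z)/(2S_{−1}(z)) − S_{−1}′(z)/(2S_{−1}(z))`. -/
noncomputable def S0 (α z : ℝ) : ℝ :=
  -qm1 α z / (2 * Sm1 z) - deriv Sm1 z / (2 * Sm1 z)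

/-- `S_1(z) = −(q_0(z) + S_0′(z) + S_0(z)²)/(2S_{−1}(z))`. -/
noncomputable def S1 (α z : ℝ) : ℝ :=
  -(q0 α z + deriv (S0 α) z + S0 α z ^ 2) / (2 * Sm1 z)

/-- `C_1(z,α) = t/8 − α²t/2 − αt²/2 − 5t³/24` with `t = (1+z²)^{−1/2}`. -/
noncomputable def C1 (α z : ℝ) : ℝ :=
  (1 + z ^ 2) ^ (-(1 / 2) : ℝ) / 8 - α ^ 2 * (1 + z ^ 2) ^ (-(1 / 2) : ℝ) / 2 -
    α * ((1 + z ^ 2) ^ (-(1 / 2) : ℝ)) ^ 2 / 2 - 5 * ((1 + z ^ 2) ^ (-(1 / 2) : ℝ)) ^ 3 / 24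

open Real

noncomputable def debyeT (z : ℝ) : ℝ := (1 + z ^ 2) ^ (-(1 / 2) : ℝ)

lemma debyeT_eq_inv_sqrt (z : ℝ) : debyeT z = (√(1 + z ^ 2))⁻¹ := by
  rw [debyeT, rpow_neg (by positivity), sqrt_eq_rpow]

lemma debyeT_pos (z : ℝ) : 0 < debyeT z := by
  rw [debyeT_eq_inv_sqrt]; positivity

lemma debyeT_sq_mul_one_add_sq (z : ℝ) : debyeT z ^ 2 * (1 + z ^ 2) = 1 := by
  rw [debyeT_eq_inv_sqrt, inv_pow, sq_sqrt (by positivity), inv_mul_cancel₀ (by positivity)]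

lemma hasDerivAt_debyeT (z : ℝ) : HasDerivAt debyeT (-z * debyeT z ^ 3) z := by
  have hpos : 0 < 1 + z ^ 2 := by positivity
  have h := (((hasDerivAt_id' z).fun_pow 2).const_add 1).sqrt hpos.ne' |>.fun_inv
    (sqrt_pos.2 hpos).ne'
  rw [show debyeT = fun x => (√(1 + x ^ 2))⁻¹ from funext debyeT_eq_inv_sqrt]
  refine h.congr_deriv ?_
  push_cast
  field_simp

lemma Sm1_eq_sqrt_div (z : ℝ) (hz : 0 < z) : Sm1 z = √(1 + z ^ 2) / z := by
  have h : -qm2 z = (1 + z ^ 2) / z ^ 2 := by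
    unfold qm2; field_simp; ring
  rw [Sm1, h, sqrt_div (by positivity), sqrt_sq hz.le]

lemma Sm1_eq_inv (z : ℝ) (hz : 0 < z) : Sm1 z = (z * debyeT z)⁻¹ := by
  rw [Sm1_eq_sqrt_div z hz, debyeT_eq_inv_sqrt]
  field_simp

lemma hasDerivAt_Sm1 (z : ℝ) (hz : 0 < z) : HasDerivAt Sm1 (-debyeT z / z ^ 2) z := by
  have ht := debyeT_pos z
  have h := ((hasDerivAt_id' z).fun_mul (hasDerivAt_debyeT z)).fun_inv (mul_pos hz ht).ne'
  refine (h.congr_of_eventuallyEq ?_).congr_deriv ?_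
  · filter_upwards [eventually_gt_nhds hz] with x hx using Sm1_eq_inv x hx
  · have := debyeT_sq_mul_one_add_sq z
    field_simp
    linear_combination this

lemma S0_eq (α z : ℝ) (hz : 0 < z) : S0 α z = (α * debyeT z + debyeT z ^ 2 / 2) / z := by
  have ht := debyeT_pos z
  rw [S0, qm1, (hasDerivAt_Sm1 z hz).deriv, Sm1_eq_inv z hz]
  field_simp
  ring

lemma hasDerivAt_S0 (α z : ℝ) (hz : 0 < z) :
    HasDerivAt (S0 α)
      (-(α + debyeT z) * debyeT z ^ 3 - (α * debyeT z + debyeT z ^ 2 / 2) / z ^ 2) z := by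
  have ht := hasDerivAt_debyeT z
  have h := ((ht.const_mul α).fun_add ((ht.fun_pow 2).div_const 2)).fun_div
    (hasDerivAt_id' z) hz.ne'
  refine (h.congr_of_eventuallyEq ?_).congr_deriv ?_
  · filter_upwards [eventually_gt_nhds hz] with x hx using S0_eq α x hx
  · push_cast
    field_simp
    ring

lemma hasDerivAt_C1 (α z : ℝ) :
    HasDerivAt (C1 α)
      (-z * debyeT z ^ 3 * (1 / 8 - α ^ 2 / 2 - α * debyeT z - 5 * debyeT z ^ 2 / 8)) z := by
  have ht := hasDerivAt_debyeT z
  refine ((((ht.div_const 8).fun_sub ((ht.const_mul (α ^ 2)).div_const 2)).fun_sub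
    (((ht.fun_pow 2).const_mul α).div_const 2)).fun_sub
    (((ht.fun_pow 3).const_mul 5).div_const 24)).congr_deriv ?_
  push_cast
  ring

lemma S1_eq (α z : ℝ) (hz : 0 < z) :
    S1 α z = -z * debyeT z ^ 3 * (1 / 8 - α ^ 2 / 2 - α * debyeT z - 5 * debyeT z ^ 2 / 8) := by
  have ht := debyeT_pos z
  rw [S1, q0, (hasDerivAt_S0 α z hz).deriv, S0_eq α z hz, Sm1_eq_inv z hz]
  field_simp
  linear_combination (-8) * (16 * α ^ 2 + 16 * α * debyeT z + 4 * debyeT z ^ 2 - 4) *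
    debyeT_sq_mul_one_add_sq z

/-- `S_{−1}(z) = √(1+z²)/z` and `S_1(z) = dC_1(z,α)/dz` for `z > 0`. -/
theorem stmt_14 (α : ℝ) :
    ∀ z : ℝ, 0 < z →
      Sm1 z = Real.sqrt (1 + z ^ 2) / z ∧
      S1 α z = deriv (C1 α) z :=
  fun z hz => ⟨Sm1_eq_sqrt_div z hz, by rw [S1_eq α z hz, (hasDerivAt_C1 α z).deriv]⟩
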